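/- Let x_{t+1} = A x_t + Σ_{i=1}^m u_t[i] B_i x_t + w_t with i.i.d. zero-mean inputs u_t of covariance σ_u² I_m and i.i.d. zero-mean noise w_t with covariance Σ_w, all independent as in the standard setup. Define Ã := A⊗A + σ_u² Σ_{k=1}^m B_k ⊗ B_k ∈ ℝ^{n²×n²}. If ρ(Ã) ≤ 1, then there exist a constant c < ∞ and an integer r with 0 ≤ r ≤ n², such that E[‖x_t‖₂²] ≤ c(1 + t^r) for all t ≥ 0. -/

import Mathlib

/-!
With `S_t := vec E[x_t x_tᵀ]`, the independence of `u_t` from `x_t` and of `w_t` from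
`(u_t, x_t)`, together with the first and second moments of `u_t` and `w_t`, turn the dynamics
into the affine recursion `S_{t+1} = Ã S_t + vec Σ_w`. Then `S_{t+1} - S_t = Ãᵗ (S_1 - S_0)`,
so by Cayley–Hamilton the sequence `S` is annihilated by `(X - 1) · χ_Ã` evaluated at the shift
operator. All roots of this polynomial lie in the closed unit disc, and peeling them off one
at a time (if `‖a_{t+1} - μ a_t‖ = O(tᵏ)` and `|μ| ≤ 1` then `‖a_t‖ = O(tᵏ⁺¹)`) shows that
`S_t = O(t^{n²})`, the degree of the polynomial minus one. Finally `E‖x_t‖² = tr S_t`.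
-/

open MeasureTheory ProbabilityTheory Matrix

section Growth

open Polynomial

variable {E : Type*} [NormedAddCommGroup E] [NormedSpace ℂ E]

noncomputable def seqShift : Module.End ℂ (ℕ → E) := LinearMap.funLeft ℂ E Nat.succ

@[simp]
lemma seqShift_apply (a : ℕ → E) (t : ℕ) : seqShift a t = a (t + 1) := rfl

lemma aeval_seqShift_X_sub_C_apply (μ : ℂ) (a : ℕ → E) (t : ℕ) :
    aeval seqShift (X - C μ) a t = a (t + 1) - μ • a t := by
  simp [Module.algebraMap_end_apply]

lemma norm_le_norm_zero_add_sum {μ : ℂ} (hμ : ‖μ‖ ≤ 1) (a : ℕ → E) (t : ℕ) :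
    ‖a t‖ ≤ ‖a 0‖ + ∑ s ∈ Finset.range t, ‖a (s + 1) - μ • a s‖ := by
  induction t with
  | zero => simp
  | succ t ih =>
    calc ‖a (t + 1)‖ = ‖μ • a t + (a (t + 1) - μ • a t)‖ := by rw [add_sub_cancel]
      _ ≤ ‖a t‖ + ‖a (t + 1) - μ • a t‖ := by
        grw [norm_add_le, norm_smul, hμ, one_mul]
      _ ≤ _ := by grw [ih, Finset.sum_range_succ, add_assoc]

lemma norm_le_of_norm_sub_smul_le {μ : ℂ} (hμ : ‖μ‖ ≤ 1) {a : ℕ → E} {C : ℝ} {k : ℕ}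
    (ha : ∀ t : ℕ, ‖a (t + 1) - μ • a t‖ ≤ C * (1 + t) ^ k) (t : ℕ) :
    ‖a t‖ ≤ (‖a 0‖ + C) * (1 + t) ^ (k + 1) := by
  have hC : 0 ≤ C := by simpa using (norm_nonneg _).trans (ha 0)
  calc ‖a t‖ ≤ ‖a 0‖ + ∑ s ∈ Finset.range t, C * (1 + t : ℝ) ^ k := by
        grw [norm_le_norm_zero_add_sum hμ a t]
        gcongr with s hs
        refine (ha s).trans ?_
        gcongr
        exact_mod_cast (Finset.mem_range.mp hs).le
    _ = ‖a 0‖ + t * C * (1 + t) ^ k := by simp [mul_assoc]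
    _ ≤ (‖a 0‖ + C) * (1 + t) ^ (k + 1) := by
      rw [add_mul]
      refine add_le_add (le_mul_of_one_le_right (norm_nonneg _) (one_le_pow₀ (by simp))) ?_
      have hCt : 0 ≤ C * (1 + t : ℝ) ^ k := by positivity
      rw [pow_succ]
      nlinarith

theorem exists_norm_le_of_aeval_seqShift_eq_zero (s : Multiset ℂ) (hs : ∀ μ ∈ s, ‖μ‖ ≤ 1)
    {a : ℕ → E} (ha : aeval seqShift (s.map fun μ => X - C μ).prod a = 0) :
    ∃ C, 0 ≤ C ∧ ∀ t : ℕ, ‖a t‖ ≤ C * (1 + t) ^ (s.card - 1) := by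
  induction s using Multiset.induction_on generalizing a with
  | empty => exact ⟨0, le_rfl, fun t => by simp_all⟩
  | cons μ s ih =>
    have hμ : ‖μ‖ ≤ 1 := hs μ (Multiset.mem_cons_self μ s)
    set b := aeval seqShift (X - C μ) a
    have hb : aeval seqShift (s.map fun μ => X - C μ).prod b = 0 := by
      rwa [Multiset.map_cons, Multiset.prod_cons, mul_comm, map_mul] at ha
    rcases s.empty_or_exists_mem with rfl | ⟨ν, hν⟩
    · refine ⟨‖a 0‖, norm_nonneg _, fun t => ?_⟩
      have hb0 : ∀ s, ‖a (s + 1) - μ • a s‖ = 0 := fun s => by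
        simpa [b, aeval_seqShift_X_sub_C_apply] using congrFun hb s
      simpa [hb0] using norm_le_norm_zero_add_sum hμ a t
    · obtain ⟨C, hC, hbC⟩ := ih (fun ν hν => hs ν (Multiset.mem_cons_of_mem hν)) hb
      refine ⟨‖a 0‖ + C, by positivity, fun t => ?_⟩
      have hcard : (μ ::ₘ s).card - 1 = s.card - 1 + 1 := by
        have := Multiset.card_pos_iff_exists_mem.mpr ⟨ν, hν⟩
        rw [Multiset.card_cons]
        omega
      rw [hcard]
      exact norm_le_of_norm_sub_smul_le hμ (fun t => by
        simpa [b, aeval_seqShift_X_sub_C_apply] using hbC t) t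

end Growth

section MatrixPowers

open Polynomial

variable {ι : Type*} [Fintype ι] [DecidableEq ι]

lemma aeval_seqShift_pow_mulVec (M : Matrix ι ι ℂ) (p : ℂ[X]) (v : ι → ℂ) :
    aeval seqShift p (fun t => (M ^ t) *ᵥ v) = fun t => (M ^ t) *ᵥ (aeval M p *ᵥ v) := by
  induction p using Polynomial.induction_on generalizing v with
  | C c => ext t; simp [Algebra.algebraMap_eq_smul_one, smul_mulVec, mulVec_smul]
  | add p q hp hq => ext t; simp [hp, hq, add_mulVec, mulVec_add]
  | monomial k c ih =>
    have hshift : seqShift (fun t => (M ^ t) *ᵥ v) = fun t => (M ^ t) *ᵥ (M *ᵥ v) := by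
      ext t; simp [pow_succ, mulVec_mulVec]
    rw [pow_succ, ← mul_assoc, map_mul, Module.End.mul_apply, aeval_X, hshift, ih]
    simp only [map_mul, aeval_X, mulVec_mulVec]

lemma aeval_seqShift_charpoly_pow_mulVec (M : Matrix ι ι ℂ) (v : ι → ℂ) :
    aeval seqShift M.charpoly (fun t => (M ^ t) *ᵥ v) = 0 := by
  ext1 t
  simp [aeval_seqShift_pow_mulVec, Matrix.aeval_self_charpoly]

lemma aeval_seqShift_X_sub_one_mul_charpoly_eq_zero (M : Matrix ι ι ℂ) {s : ℕ → ι → ℂ} {b : ι → ℂ}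
    (hs : ∀ t, s (t + 1) = M *ᵥ s t + b) :
    aeval seqShift ((X - C 1 : ℂ[X]) * M.charpoly) s = 0 := by
  have hdiff : ∀ t, s (t + 1) - s t = (M ^ t) *ᵥ (s 1 - s 0) := by
    intro t
    induction t with
    | zero => simp
    | succ t ih =>
      rw [pow_succ', ← mulVec_mulVec, ← ih, hs (t + 1), hs t, mulVec_sub]
      abel
  have hdiff' : aeval seqShift (X - C 1 : ℂ[X]) s = fun t => (M ^ t) *ᵥ (s 1 - s 0) := by
    ext1 t
    simp [← hdiff]
  rw [mul_comm, map_mul, Module.End.mul_apply, hdiff', aeval_seqShift_charpoly_pow_mulVec]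

theorem exists_abs_le_of_affine_recurrence (M : Matrix ι ι ℝ)
    (hρ : ∀ μ : ℂ, μ ∈ spectrum ℂ (M.map (algebraMap ℝ ℂ)) → ‖μ‖ ≤ 1)
    {s : ℕ → ι → ℝ} {b : ι → ℝ} (hs : ∀ t, s (t + 1) = M *ᵥ s t + b) :
    ∃ C, 0 ≤ C ∧ ∀ t i, |s t i| ≤ C * (1 + t) ^ Fintype.card ι := by
  set Mc := M.map (algebraMap ℝ ℂ)
  set sc : ℕ → ι → ℂ := fun t i => s t i
  have hsc : ∀ t, sc (t + 1) = Mc *ᵥ sc t + fun i => (b i : ℂ) := fun t => by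
    ext i
    simp [sc, Mc, hs t, mulVec, dotProduct]
  have hroots : ∀ μ ∈ 1 ::ₘ Mc.charpoly.roots, ‖μ‖ ≤ 1 := by
    simp only [Multiset.mem_cons, forall_eq_or_imp, norm_one, le_refl, true_and]
    exact fun μ hμ => hρ μ (Matrix.mem_spectrum_iff_isRoot_charpoly.mpr (isRoot_of_mem_roots hμ))
  have hprod : ((1 ::ₘ Mc.charpoly.roots).map fun μ => X - C μ).prod = (X - C 1) * Mc.charpoly := by
    rw [Multiset.map_cons, Multiset.prod_cons,
      ← (IsAlgClosed.splits _).eq_prod_roots_of_monic Mc.charpoly_monic]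
  have hcard : (1 ::ₘ Mc.charpoly.roots).card - 1 = Fintype.card ι := by
    rw [Multiset.card_cons, Nat.add_sub_cancel, ← (IsAlgClosed.splits _).natDegree_eq_card_roots,
      Matrix.charpoly_natDegree_eq_dim]
  obtain ⟨C, hC, hbound⟩ := exists_norm_le_of_aeval_seqShift_eq_zero _ hroots
    (hprod ▸ aeval_seqShift_X_sub_one_mul_charpoly_eq_zero Mc hsc)
  refine ⟨C, hC, fun t i => ?_⟩
  rw [← hcard]
  calc |s t i| = ‖sc t i‖ := by simp [sc]
    _ ≤ ‖sc t‖ := norm_le_pi_norm _ i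
    _ ≤ _ := hbound t

end MatrixPowers

lemma measurableEmbedding_inl {α β : Type*} [MeasurableSpace α] [MeasurableSpace β] :
    MeasurableEmbedding (Sum.inl : α → α ⊕ β) :=
  ⟨Sum.inl_injective, measurable_inl, fun _ hs => hs.inl_image⟩

lemma measurableEmbedding_inr {α β : Type*} [MeasurableSpace α] [MeasurableSpace β] :
    MeasurableEmbedding (Sum.inr : β → α ⊕ β) :=
  ⟨Sum.inr_injective, measurable_inr, fun _ hs => hs.inr_image⟩

lemma MeasurableEmbedding.measurable_comap_comp {Ω α β : Type*} [MeasurableSpace α]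
    [mβ : MeasurableSpace β] {e : α → β} (he : MeasurableEmbedding e) (f : Ω → α) :
    Measurable[MeasurableSpace.comap (e ∘ f) mβ] f := by
  rw [← MeasurableSpace.comap_comp, he.comap_eq]
  exact comap_measurable f

def drivingFamily {Ω α β : Type*} (x₀ : Ω → α) (u : ℕ → Ω → β) (w : ℕ → Ω → α)
    (o : Option (ℕ ⊕ ℕ)) : Ω → β ⊕ α :=
  o.elim (fun ω => .inr (x₀ ω)) (Sum.elim (fun t ω => .inl (u t ω)) (fun t ω => .inr (w t ω)))

def pastIndices (t : ℕ) : Set (Option (ℕ ⊕ ℕ)) :=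
  insert none (some '' (Sum.inl '' Set.Iio t ∪ Sum.inr '' Set.Iio t))

section CausalRecursion

variable {Ω α β γ : Type*} [MeasurableSpace α] [MeasurableSpace β] [MeasurableSpace γ]
  {m : Option (ℕ ⊕ ℕ) → MeasurableSpace Ω} {x : ℕ → Ω → α} {u : ℕ → Ω → β} {w : ℕ → Ω → γ}
  {f : α × β × γ → α}

lemma pastIndices_mono {s t : ℕ} (h : s ≤ t) : pastIndices s ⊆ pastIndices t := by
  unfold pastIndices
  gcongr

lemma measurable_iSup_pastIndices (hx0 : Measurable[m none] (x 0))
    (hu : ∀ t, Measurable[m (some (.inl t))] (u t)) (hw : ∀ t, Measurable[m (some (.inr t))] (w t))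
    (hf : Measurable f) (hdyn : ∀ t ω, x (t + 1) ω = f (x t ω, u t ω, w t ω)) (t : ℕ) :
    Measurable[⨆ o ∈ pastIndices t, m o] (x t) := by
  induction t with
  | zero => exact hx0.mono (le_iSup₂ (f := fun o _ => m o) none (by simp [pastIndices])) le_rfl
  | succ t ih =>
    have hle : ∀ o ∈ pastIndices (t + 1), m o ≤ ⨆ o ∈ pastIndices (t + 1), m o :=
      fun o ho => le_iSup₂ (f := fun o _ => m o) o ho
    rw [show x (t + 1) = fun ω => f (x t ω, u t ω, w t ω) from funext (hdyn t)]
    refine hf.comp (Measurable.prodMk ?_ (Measurable.prodMk ?_ ?_))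
    · exact ih.mono (biSup_mono (pastIndices_mono t.le_succ)) le_rfl
    · exact (hu t).mono (hle _ (by simp [pastIndices])) le_rfl
    · exact (hw t).mono (hle _ (by simp [pastIndices])) le_rfl

variable [mΩ : MeasurableSpace Ω] {P : Measure Ω}

theorem indepFun_input_state (hm : ∀ o, m o ≤ mΩ) (hindep : iIndep m P)
    (hx0 : Measurable[m none] (x 0)) (hu : ∀ t, Measurable[m (some (.inl t))] (u t))
    (hw : ∀ t, Measurable[m (some (.inr t))] (w t)) (hf : Measurable f)
    (hdyn : ∀ t ω, x (t + 1) ω = f (x t ω, u t ω, w t ω)) (t : ℕ) :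
    IndepFun (u t) (x t) P := by
  have hdisj : Disjoint {some (.inl t)} (pastIndices t) := by simp [pastIndices]
  rw [IndepFun_iff_Indep]
  refine indep_of_indep_of_le (indep_iSup_of_disjoint hm hindep hdisj) ?_ ?_
  · exact (hu t).comap_le.trans (le_iSup₂ (f := fun o _ => m o) _ rfl)
  · exact (measurable_iSup_pastIndices hx0 hu hw hf hdyn t).comap_le

theorem indepFun_noise_input_state (hm : ∀ o, m o ≤ mΩ) (hindep : iIndep m P)
    (hx0 : Measurable[m none] (x 0)) (hu : ∀ t, Measurable[m (some (.inl t))] (u t))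
    (hw : ∀ t, Measurable[m (some (.inr t))] (w t)) (hf : Measurable f)
    (hdyn : ∀ t ω, x (t + 1) ω = f (x t ω, u t ω, w t ω)) (t : ℕ) :
    IndepFun (w t) (fun ω => (u t ω, x t ω)) P := by
  have hdisj : Disjoint {some (.inr t)} (insert (some (.inl t)) (pastIndices t)) := by
    simp [pastIndices]
  rw [IndepFun_iff_Indep]
  refine indep_of_indep_of_le (indep_iSup_of_disjoint hm hindep hdisj) ?_ ?_
  · exact (hw t).comap_le.trans (le_iSup₂ (f := fun o _ => m o) _ rfl)
  · refine Measurable.comap_le (Measurable.prodMk ?_ ?_)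
    · exact (hu t).mono (le_iSup₂ (f := fun o _ => m o) _ (Set.mem_insert _ _)) le_rfl
    · exact (measurable_iSup_pastIndices hx0 hu hw hf hdyn t).mono
        (biSup_mono fun o ho => Set.mem_insert_of_mem _ ho) le_rfl

theorem indepFun_of_iIndepFun_drivingFamily {x w : ℕ → Ω → α} {u : ℕ → Ω → β}
    {f : α × β × α → α} (hx0 : Measurable (x 0)) (hu : ∀ t, Measurable (u t))
    (hw : ∀ t, Measurable (w t)) (hf : Measurable f)
    (hdyn : ∀ t ω, x (t + 1) ω = f (x t ω, u t ω, w t ω)) {F : Option (ℕ ⊕ ℕ) → Ω → β ⊕ α}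
    (hindep : iIndepFun F P) (hF : F = drivingFamily (x 0) u w) :
    (∀ t, IndepFun (u t) (x t) P) ∧ ∀ t, IndepFun (w t) (fun ω => (u t ω, x t ω)) P := by
  subst hF
  rw [iIndepFun_iff_iIndep] at hindep
  have hm : ∀ o, MeasurableSpace.comap (drivingFamily (x 0) u w o) inferInstance ≤ mΩ := by
    rintro (_ | t | t)
    exacts [(measurable_inr.comp hx0).comap_le, (measurable_inl.comp (hu t)).comap_le,
      (measurable_inr.comp (hw t)).comap_le]
  have hx0' := (measurableEmbedding_inr (α := β)).measurable_comap_comp (x 0)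
  have hu' := fun t => (measurableEmbedding_inl (β := α)).measurable_comap_comp (u t)
  have hw' := fun t => (measurableEmbedding_inr (α := β)).measurable_comap_comp (w t)
  exact ⟨indepFun_input_state hm hindep hx0' hu' hw' hf hdyn,
    indepFun_noise_input_state hm hindep hx0' hu' hw' hf hdyn⟩

end CausalRecursion

section SecondMoment

variable {Ω ι κ : Type*} [MeasurableSpace Ω] {P : Measure Ω}

noncomputable def secondMoment (P : Measure Ω) (X : Ω → ι → ℝ) : ι × ι → ℝ :=
  fun p => ∫ ω, X ω p.1 * X ω p.2 ∂P

lemma secondMoment_add_of_indepFun {V W : Ω → ι → ℝ} (hV : Measurable V) (hW : Measurable W)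
    (hindep : IndepFun W V P) (hWmean : ∀ i, ∫ ω, W ω i ∂P = 0)
    (hVV : ∀ i j, Integrable (fun ω => V ω i * V ω j) P)
    (hWV : ∀ i j, Integrable (fun ω => W ω i * V ω j) P)
    (hWW : ∀ i j, Integrable (fun ω => W ω i * W ω j) P) :
    secondMoment P (fun ω => V ω + W ω) = secondMoment P V + secondMoment P W := by
  have hcross : ∀ i j, ∫ ω, W ω i * V ω j ∂P = 0 := fun i j =>
    ((hindep.comp (measurable_pi_apply i) (measurable_pi_apply j)).integral_fun_mul_eq_mul_integral
      ((measurable_pi_apply i).comp hW).aestronglyMeasurable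
      ((measurable_pi_apply j).comp hV).aestronglyMeasurable).trans
      (by simp [hWmean])
  ext ⟨i, j⟩
  calc ∫ ω, (V ω + W ω) i * (V ω + W ω) j ∂P
      = ∫ ω, V ω i * V ω j + W ω i * V ω j + W ω j * V ω i + W ω i * W ω j ∂P := by
        congr 1; ext ω; simp only [Pi.add_apply]; ring
    _ = _ := by
      have h2 : Integrable (fun ω => V ω i * V ω j + W ω i * V ω j) P := (hVV i j).add (hWV i j)
      have h3 : Integrable (fun ω => V ω i * V ω j + W ω i * V ω j + W ω j * V ω i) P :=
        h2.add (hWV j i)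
      rw [integral_add h3 (hWW i j), integral_add h2 (hWV j i), integral_add (hVV i j) (hWV i j),
        hcross, hcross]
      simp [secondMoment]

variable [Fintype ι]

lemma integrable_mul_mulVec_apply {X : Ω → ι → ℝ} {f : Ω → ℝ}
    (hf : ∀ p, Integrable (fun ω => f ω * X ω p) P) (M : Matrix ι ι ℝ) (i : ι) :
    Integrable (fun ω => f ω * (M *ᵥ X ω) i) P := by
  simp only [mulVec, dotProduct, Finset.mul_sum, mul_left_comm (f _)]
  exact integrable_finsetSum _ fun p _ => (hf p).const_mul _

lemma mul_mulVec_apply_mul_mulVec_apply (M N : Matrix ι ι ℝ) (v : ι → ℝ) (c : ℝ) (i j : ι) :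
    c * ((M *ᵥ v) i * (N *ᵥ v) j) = ∑ p, ∑ q, M i p * N j q * (c * v p * v q) := by
  simp only [mulVec, dotProduct]
  rw [Finset.sum_mul_sum, Finset.mul_sum]
  simp only [Finset.mul_sum]
  exact Finset.sum_congr rfl fun p _ => Finset.sum_congr rfl fun q _ => by ring

lemma integrable_mul_mulVec_apply_mul_mulVec_apply {X : Ω → ι → ℝ} {f : Ω → ℝ}
    (hf : ∀ p q, Integrable (fun ω => f ω * X ω p * X ω q) P) (M N : Matrix ι ι ℝ) (i j : ι) :
    Integrable (fun ω => f ω * ((M *ᵥ X ω) i * (N *ᵥ X ω) j)) P := by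
  simp only [mul_mulVec_apply_mul_mulVec_apply]
  exact integrable_finsetSum _ fun p _ => integrable_finsetSum _ fun q _ => (hf p q).const_mul _

lemma integrable_mulVec_apply_mul_mulVec_apply {X : Ω → ι → ℝ}
    (hX : ∀ p q, Integrable (fun ω => X ω p * X ω q) P) (M N : Matrix ι ι ℝ) (i j : ι) :
    Integrable (fun ω => (M *ᵥ X ω) i * (N *ᵥ X ω) j) P := by
  simpa using
    integrable_mul_mulVec_apply_mul_mulVec_apply (f := fun _ => 1) (by simpa using hX) M N i j

lemma integral_mulVec_apply_mul_mulVec_apply {X : Ω → ι → ℝ}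
    (hX : ∀ p q, Integrable (fun ω => X ω p * X ω q) P) (M N : Matrix ι ι ℝ) (i j : ι) :
    ∫ ω, (M *ᵥ X ω) i * (N *ᵥ X ω) j ∂P
      = (kroneckerMap (· * ·) M N *ᵥ secondMoment P X) (i, j) := by
  have h := fun ω => mul_mulVec_apply_mul_mulVec_apply M N (X ω) 1 i j
  simp only [one_mul] at h
  simp only [h]
  rw [integral_finsetSum _ fun p _ => integrable_finsetSum _ fun q _ => (hX p q).const_mul _]
  simp only [mulVec, dotProduct, Fintype.sum_prod_type, kroneckerMap_apply, secondMoment]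
  refine Finset.sum_congr rfl fun p _ => ?_
  rw [integral_finsetSum _ fun q _ => (hX p q).const_mul _]
  simp only [integral_const_mul]

lemma mulVec_add_sum_smul_mulVec_mul [Fintype κ] (A : Matrix ι ι ℝ) (B : κ → Matrix ι ι ℝ)
    (c : κ → ℝ) (v : ι → ℝ) (i j : ι) :
    (A *ᵥ v + ∑ k, c k • B k *ᵥ v) i * (A *ᵥ v + ∑ k, c k • B k *ᵥ v) j
      = (A *ᵥ v) i * (A *ᵥ v) j
        + ∑ k, (c k * ((A *ᵥ v) i * (B k *ᵥ v) j) + c k * ((B k *ᵥ v) i * (A *ᵥ v) j))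
        + ∑ k, ∑ l, c k * c l * ((B k *ᵥ v) i * (B l *ᵥ v) j) := by
  simp only [Pi.add_apply, Finset.sum_apply, Pi.smul_apply, smul_eq_mul]
  rw [add_mul, mul_add, mul_add, Finset.sum_mul_sum, Finset.mul_sum, Finset.sum_mul,
    Finset.sum_add_distrib]
  ring_nf
  exact congrArg _ (Finset.sum_congr rfl fun k _ => Finset.sum_congr rfl fun l _ => by ring)

lemma integrable_mulVec_add_sum_smul_mulVec_mul [Fintype κ] {X : Ω → ι → ℝ} {U : Ω → κ → ℝ}
    (hXX : ∀ p q, Integrable (fun ω => X ω p * X ω q) P)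
    (hUXX : ∀ k p q, Integrable (fun ω => U ω k * X ω p * X ω q) P)
    (hUUXX : ∀ k l p q, Integrable (fun ω => U ω k * U ω l * X ω p * X ω q) P)
    (A : Matrix ι ι ℝ) (B : κ → Matrix ι ι ℝ) (i j : ι) :
    Integrable (fun ω => (A *ᵥ X ω + ∑ k, U ω k • B k *ᵥ X ω) i
      * (A *ᵥ X ω + ∑ k, U ω k • B k *ᵥ X ω) j) P := by
  have hUXX' := fun k => integrable_mul_mulVec_apply_mul_mulVec_apply (hUXX k)
  simp only [mulVec_add_sum_smul_mulVec_mul]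
  exact ((integrable_mulVec_apply_mul_mulVec_apply hXX A A i j).add
    (integrable_finsetSum _ fun k _ => (hUXX' k _ _ i j).add (hUXX' k _ _ i j))).add
    (integrable_finsetSum _ fun k _ => integrable_finsetSum _ fun l _ =>
      integrable_mul_mulVec_apply_mul_mulVec_apply (hUUXX k l) _ _ i j)

lemma integral_mul_mulVec_apply_mul_mulVec_apply_of_indepFun {X : Ω → ι → ℝ} {U : Ω → κ → ℝ}
    (hX : Measurable X) (hU : Measurable U) (hindep : IndepFun U X P) {f : (κ → ℝ) → ℝ}
    (hf : Measurable f) (M N : Matrix ι ι ℝ) (i j : ι) :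
    ∫ ω, f (U ω) * ((M *ᵥ X ω) i * (N *ᵥ X ω) j) ∂P
      = (∫ ω, f (U ω) ∂P) * ∫ ω, (M *ᵥ X ω) i * (N *ᵥ X ω) j ∂P := by
  have hg : Measurable fun v : ι → ℝ => (M *ᵥ v) i * (N *ᵥ v) j := by fun_prop
  exact (hindep.comp hf hg).integral_fun_mul_eq_mul_integral (hf.comp hU).aestronglyMeasurable
    (hg.comp hX).aestronglyMeasurable

lemma secondMoment_mulVec_add_sum_smul_mulVec [Fintype κ] [DecidableEq κ] {X : Ω → ι → ℝ}
    {U : Ω → κ → ℝ} (hX : Measurable X) (hU : Measurable U) (hindep : IndepFun U X P) {σ : ℝ}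
    (hUmean : ∀ k, ∫ ω, U ω k ∂P = 0)
    (hUcov : ∀ k l, ∫ ω, U ω k * U ω l ∂P = if k = l then σ ^ 2 else 0)
    (hXX : ∀ p q, Integrable (fun ω => X ω p * X ω q) P)
    (hUXX : ∀ k p q, Integrable (fun ω => U ω k * X ω p * X ω q) P)
    (hUUXX : ∀ k l p q, Integrable (fun ω => U ω k * U ω l * X ω p * X ω q) P)
    (A : Matrix ι ι ℝ) (B : κ → Matrix ι ι ℝ) :
    secondMoment P (fun ω => A *ᵥ X ω + ∑ k, U ω k • B k *ᵥ X ω)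
      = (kroneckerMap (· * ·) A A + σ ^ 2 • ∑ k, kroneckerMap (· * ·) (B k) (B k))
          *ᵥ secondMoment P X := by
  ext ⟨i, j⟩
  have hlin : ∀ k (M N : Matrix ι ι ℝ), ∫ ω, U ω k * ((M *ᵥ X ω) i * (N *ᵥ X ω) j) ∂P = 0 :=
    fun k M N => (integral_mul_mulVec_apply_mul_mulVec_apply_of_indepFun hX hU hindep
      (measurable_pi_apply k) M N i j).trans (by simp [hUmean])
  have hquad : ∀ k l, ∫ ω, U ω k * U ω l * ((B k *ᵥ X ω) i * (B l *ᵥ X ω) j) ∂P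
      = (if k = l then σ ^ 2 else 0) * ∫ ω, (B k *ᵥ X ω) i * (B l *ᵥ X ω) j ∂P := fun k l =>
    (integral_mul_mulVec_apply_mul_mulVec_apply_of_indepFun hX hU hindep
      (f := fun v => v k * v l) (by fun_prop) _ _ i j).trans (by rw [hUcov])
  have hA := integrable_mulVec_apply_mul_mulVec_apply hXX A A i j
  have hUXX' := fun k => integrable_mul_mulVec_apply_mul_mulVec_apply (hUXX k)
  have hUUXX' := fun k l => integrable_mul_mulVec_apply_mul_mulVec_apply (hUUXX k l)
  have hcross : ∀ k, Integrable (fun ω => U ω k * ((A *ᵥ X ω) i * (B k *ᵥ X ω) j)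
      + U ω k * ((B k *ᵥ X ω) i * (A *ᵥ X ω) j)) P :=
    fun k => (hUXX' k A (B k) i j).add (hUXX' k (B k) A i j)
  simp only [secondMoment, mulVec_add_sum_smul_mulVec_mul]
  rw [integral_add ?_ (integrable_finsetSum _ fun k _ => integrable_finsetSum _ fun l _ =>
      hUUXX' k l _ _ i j), integral_add hA (integrable_finsetSum _ fun k _ => hcross k),
    integral_finsetSum _ fun k _ => hcross k,
    integral_finsetSum _ fun k _ => integrable_finsetSum _ fun l _ => hUUXX' k l _ _ i j,
    Finset.sum_congr rfl fun k _ => integral_finsetSum _ fun l _ => hUUXX' k l _ _ i j]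
  · simp only [integral_add (hUXX' _ _ _ i j) (hUXX' _ _ _ i j), hlin, hquad, add_zero,
      Finset.sum_const_zero, ite_mul, zero_mul, Finset.sum_ite_eq, Finset.mem_univ, if_true,
      integral_mulVec_apply_mul_mulVec_apply hXX]
    simp [add_mulVec, smul_mulVec, sum_mulVec, Finset.mul_sum]
  · exact hA.add (integrable_finsetSum _ fun k _ => hcross k)

theorem secondMoment_bilinear_step [Fintype κ] [DecidableEq κ] {X W : Ω → ι → ℝ}
    {U : Ω → κ → ℝ} (hX : Measurable X) (hU : Measurable U) (hW : Measurable W)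
    (hindepU : IndepFun U X P) (hindepW : IndepFun W (fun ω => (U ω, X ω)) P) {σ : ℝ}
    (hUmean : ∀ k, ∫ ω, U ω k ∂P = 0)
    (hUcov : ∀ k l, ∫ ω, U ω k * U ω l ∂P = if k = l then σ ^ 2 else 0)
    (hWmean : ∀ i, ∫ ω, W ω i ∂P = 0)
    (hXX : ∀ p q, Integrable (fun ω => X ω p * X ω q) P)
    (hUUXX : ∀ k l p q, Integrable (fun ω => U ω k * U ω l * X ω p * X ω q) P)
    (hUXX : ∀ k p q, Integrable (fun ω => U ω k * X ω p * X ω q) P)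
    (hWX : ∀ i p, Integrable (fun ω => W ω i * X ω p) P)
    (hWUX : ∀ i k p, Integrable (fun ω => W ω i * U ω k * X ω p) P)
    (hWW : ∀ i j, Integrable (fun ω => W ω i * W ω j) P)
    (A : Matrix ι ι ℝ) (B : κ → Matrix ι ι ℝ) :
    secondMoment P (fun ω => A *ᵥ X ω + ∑ k, U ω k • B k *ᵥ X ω + W ω)
      = (kroneckerMap (· * ·) A A + σ ^ 2 • ∑ k, kroneckerMap (· * ·) (B k) (B k))
          *ᵥ secondMoment P X + secondMoment P W := by
  have hstate : Measurable fun z : (κ → ℝ) × (ι → ℝ) => A *ᵥ z.2 + ∑ k, z.1 k • B k *ᵥ z.2 := by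
    fun_prop
  have hWV : ∀ i j, Integrable (fun ω => W ω i * (A *ᵥ X ω + ∑ k, U ω k • B k *ᵥ X ω) j) P := by
    intro i j
    simp only [Pi.add_apply, Finset.sum_apply, Pi.smul_apply, smul_eq_mul, mul_add,
      Finset.mul_sum, ← mul_assoc]
    exact (integrable_mul_mulVec_apply (hWX i) A j).add (integrable_finsetSum _ fun k _ =>
      integrable_mul_mulVec_apply (hWUX i k) (B k) j)
  rw [secondMoment_add_of_indepFun (V := fun ω => A *ᵥ X ω + ∑ k, U ω k • B k *ᵥ X ω)
    (hstate.comp (hU.prodMk hX)) hW (hindepW.comp measurable_id hstate)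
    hWmean (integrable_mulVec_add_sum_smul_mulVec_mul hXX hUXX hUUXX A B) hWV hWW,
    secondMoment_mulVec_add_sum_smul_mulVec hX hU hindepU hUmean hUcov hXX hUXX hUUXX]

end SecondMoment

theorem stmt_11
    {Ω : Type*} [MeasurableSpace Ω] (P : Measure Ω)
    (n m : ℕ)
    (A : Matrix (Fin n) (Fin n) ℝ) (B : Fin m → Matrix (Fin n) (Fin n) ℝ)
    (x : ℕ → Ω → Fin n → ℝ) (u : ℕ → Ω → Fin m → ℝ) (w : ℕ → Ω → Fin n → ℝ)
    (σu : ℝ) (Sw : Matrix (Fin n) (Fin n) ℝ)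
    -- dynamics
    (hdyn : ∀ t ω, x (t + 1) ω
      = A.mulVec (x t ω) + (∑ i, u t ω i • (B i).mulVec (x t ω)) + w t ω)
    -- measurability
    (hxm : ∀ t, Measurable (x t)) (hum : ∀ t, Measurable (u t))
    (hwm : ∀ t, Measurable (w t))
    -- zero means
    (humean : ∀ t i, ∫ ω, u t ω i ∂P = 0)
    (hwmean : ∀ t i, ∫ ω, w t ω i ∂P = 0)
    -- covariances
    (hucov : ∀ t i j, ∫ ω, u t ω i * u t ω j ∂P = if i = j then σu ^ 2 else 0)
    (hwcov : ∀ t i j, ∫ ω, w t ω i * w t ω j ∂P = Sw i j)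
    -- mutual independence of x₀, the inputs, and the noises
    (hindep : iIndepFun
      (m := fun _ : Option (ℕ ⊕ ℕ) =>
        (inferInstance : MeasurableSpace ((Fin m → ℝ) ⊕ (Fin n → ℝ))))
      (fun o : Option (ℕ ⊕ ℕ) => match o with
        | none => fun ω => Sum.inr (x 0 ω)
        | some (Sum.inl t) => fun ω => Sum.inl (u t ω)
        | some (Sum.inr t) => fun ω => Sum.inr (w t ω)) P)
    -- integrability of the relevant products
    (hIntxx : ∀ t i j, Integrable (fun ω => x t ω i * x t ω j) P)
    (hIntux : ∀ t i j k l, Integrable (fun ω => u t ω i * u t ω j * x t ω k * x t ω l) P)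
    (hIntux1 : ∀ t i k l, Integrable (fun ω => u t ω i * x t ω k * x t ω l) P)
    (hIntwx : ∀ t i k, Integrable (fun ω => w t ω i * x t ω k) P)
    (hIntwux : ∀ t i j k, Integrable (fun ω => w t ω i * u t ω j * x t ω k) P)
    (hIntww : ∀ t i j, Integrable (fun ω => w t ω i * w t ω j) P)
    -- spectral radius of the augmented matrix is at most 1
    (hρ : ∀ μ : ℂ,
      μ ∈ spectrum ℂ
        ((Matrix.kroneckerMap (· * ·) A A
            + σu ^ 2 • ∑ k, Matrix.kroneckerMap (· * ·) (B k) (B k)).map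
          (algebraMap ℝ ℂ)) → ‖μ‖ ≤ 1) :
    ∃ (c : ℝ) (r : ℕ), 0 ≤ c ∧ r ≤ n ^ 2 ∧
      ∀ t : ℕ, ∫ ω, (∑ i, (x t ω i) ^ 2) ∂P ≤ c * (1 + (t : ℝ) ^ r) := by
  have hupdate : Measurable fun z : (Fin n → ℝ) × (Fin m → ℝ) × (Fin n → ℝ) =>
      A *ᵥ z.1 + ∑ k, z.2.1 k • B k *ᵥ z.1 + z.2.2 := by
    fun_prop
  obtain ⟨hux, hwux⟩ :=
    indepFun_of_iIndepFun_drivingFamily (hxm 0) hum hwm hupdate hdyn hindep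
      (funext fun o => by rcases o with _ | t | t <;> rfl)
  have hrec : ∀ t, secondMoment P (x (t + 1))
      = (kroneckerMap (· * ·) A A + σu ^ 2 • ∑ k, kroneckerMap (· * ·) (B k) (B k))
          *ᵥ secondMoment P (x t) + fun p => Sw p.1 p.2 := fun t => by
    rw [funext (hdyn t), secondMoment_bilinear_step (hxm t) (hum t) (hwm t) (hux t) (hwux t)
      (humean t) (hucov t) (hwmean t) (hIntxx t) (hIntux t) (hIntux1 t) (hIntwx t) (hIntwux t)
      (hIntww t)]
    exact congrArg _ (funext fun p => hwcov t p.1 p.2)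
  obtain ⟨C, hC, hbound⟩ := exists_abs_le_of_affine_recurrence _ hρ
    (s := fun t => secondMoment P (x t)) hrec
  refine ⟨n * C * 2 ^ (n ^ 2 - 1), n ^ 2, by positivity, le_rfl, fun t => ?_⟩
  calc ∫ ω, ∑ i, x t ω i ^ 2 ∂P = ∑ i, secondMoment P (x t) (i, i) := by
        simp only [secondMoment, sq]
        exact integral_finsetSum _ fun i _ => hIntxx t i i
    _ ≤ ∑ _i : Fin n, C * (1 + t) ^ (n ^ 2) := by
        gcongr with i
        simpa [sq] using (le_abs_self _).trans (hbound t (i, i))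
    _ = n * C * (1 + t) ^ (n ^ 2) := by simp [mul_assoc]
    _ ≤ n * C * (2 ^ (n ^ 2 - 1) * (1 + t ^ (n ^ 2))) := by
        gcongr
        simpa using add_pow_le zero_le_one (Nat.cast_nonneg (α := ℝ) t) (n ^ 2)
    _ = n * C * 2 ^ (n ^ 2 - 1) * (1 + t ^ (n ^ 2)) := by ring
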